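/- arXiv:0908.0587 — 5 statements merged into one kernel-verified Lean document; each statement's English description precedes it below -/
import Mathlib

section
/- Let f : ℕ → ℝ be a non-negative function and M > 0 a constant such that |f(t+1) − f(t)| ≤ M for all t. If limsup_{t→∞} (1/t) ∑_{i=0}^{t} f(i) ≤ C for some finite constant C, then lim_{t→∞} f(t)/t = 0. -/
/-!
If `f n ≥ ε n`, then since `f` grows by at most `M` per step it stays above `ε n / 2` on the
last `≈ ε n / (2M)` indices before `n`, so `∑_{i ≤ n} f i ≳ ε² n² / (4M)`. This quadratic growth
is incompatible with the linear bound `∑_{i ≤ n} f i ≤ (C + 1) n` that the hypothesis on the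
Cesàro averages gives for large `n`.
-/

open Filter Finset

section BoundedIncrement

variable {f : ℕ → ℝ} {M : ℝ}

theorem sub_le_mul_of_succ_sub_le (hbd : ∀ t, f (t + 1) - f t ≤ M) (i k : ℕ) :
    f (i + k) - f i ≤ M * k := by
  induction k with
  | zero => simp
  | succ k ih =>
    rw [← add_assoc]
    push_cast
    linarith [hbd (i + k)]

theorem mul_sub_le_sum_range (hf : ∀ t, 0 ≤ f t) (hM : 0 ≤ M) (hbd : ∀ t, f (t + 1) - f t ≤ M)
    {k n : ℕ} (hkn : k ≤ n) :
    (k + 1) * (f n - M * k) ≤ ∑ i ∈ range (n + 1), f i := by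
  have hterm : ∀ i ∈ Icc (n - k) n, f n - M * k ≤ f i := by
    intro i hi
    obtain ⟨hki, hin⟩ := mem_Icc.mp hi
    have hstep := sub_le_mul_of_succ_sub_le hbd i (n - i)
    rw [Nat.add_sub_cancel' hin] at hstep
    have : ((n - i : ℕ) : ℝ) ≤ k := by exact_mod_cast (by omega : n - i ≤ k)
    linarith [mul_le_mul_of_nonneg_left this hM]
  have hcard : #(Icc (n - k) n) = k + 1 := by
    rw [Nat.card_Icc]; omega
  calc (k + 1) * (f n - M * k) ≤ ∑ i ∈ Icc (n - k) n, f i := by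
        simpa [hcard] using card_nsmul_le_sum _ f _ hterm
    _ ≤ ∑ i ∈ range (n + 1), f i :=
        sum_le_sum_of_subset_of_nonneg (fun i hi => by simp at hi ⊢; omega)
          (fun i _ _ => hf i)

theorem sq_le_mul_sum_range (hf : ∀ t, 0 ≤ f t) (hM : 0 < M) (hbd : ∀ t, f (t + 1) - f t ≤ M)
    {ε : ℝ} (hε : 0 ≤ ε) (hεM : ε ≤ 2 * M) {n : ℕ} (hn : ε * n ≤ f n) :
    (ε * n) ^ 2 ≤ 4 * M * ∑ i ∈ range (n + 1), f i := by
  -- the block length `⌊x⌋₊` keeps `f ≥ ε n / 2` on the block and does not exceed `n`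
  set x := ε * n / (2 * M)
  have hx : 0 ≤ x := by positivity
  have hxn : x ≤ n := by
    rw [div_le_iff₀ (by positivity)]; nlinarith [(n.cast_nonneg : (0 : ℝ) ≤ n)]
  have hk_le := Nat.floor_le hx
  have hk_lt := Nat.lt_floor_add_one x
  have hMk : M * ⌊x⌋₊ ≤ ε * n / 2 := by
    calc M * ⌊x⌋₊ ≤ M * x := by gcongr
      _ = ε * n / 2 := by simp only [x]; field_simp
  have hsum := mul_sub_le_sum_range hf hM.le hbd (Nat.cast_le.mp (hk_le.trans hxn) :
    ⌊x⌋₊ ≤ n)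
  calc (ε * n) ^ 2 = 4 * M * (x * (ε * n / 2)) := by simp only [x]; field_simp; ring
    _ ≤ 4 * M * ((⌊x⌋₊ + 1) * (f n - M * ⌊x⌋₊)) := by
        gcongr; linarith
    _ ≤ 4 * M * ∑ i ∈ range (n + 1), f i := by gcongr

theorem tendsto_div_of_sum_range_le (hf : ∀ t, 0 ≤ f t) (hM : 0 < M)
    (hbd : ∀ t, f (t + 1) - f t ≤ M) {B : ℝ}
    (hS : ∀ᶠ n : ℕ in atTop, ∑ i ∈ range (n + 1), f i ≤ B * n) :
    Tendsto (fun n : ℕ => f n / n) atTop (nhds 0) := by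
  refine tendsto_order.2 ⟨fun a ha => Eventually.of_forall fun n =>
    ha.trans_le (div_nonneg (hf n) n.cast_nonneg), fun ε hε => ?_⟩
  -- shrinking `ε` to at most `2M` is harmless and makes the block argument applicable
  set δ := min ε (2 * M)
  have hδ : 0 < δ := lt_min hε (by positivity)
  filter_upwards [hS, tendsto_natCast_atTop_atTop.eventually_gt_atTop (4 * M * B / δ ^ 2),
    eventually_gt_atTop 0] with n hSn hnB hn0
  have hn : (0 : ℝ) < n := by exact_mod_cast hn0
  rw [div_lt_iff₀ (by positivity)] at hnB
  rw [div_lt_iff₀ hn]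
  by_contra! hεn
  have hδn : δ * n ≤ f n := (mul_le_mul_of_nonneg_right (min_le_left _ _) hn.le).trans hεn
  have := sq_le_mul_sum_range hf hM hbd hδ.le (min_le_right _ _) hδn
  nlinarith

end BoundedIncrement

/-- Bounded-convergence lemma: a non-negative sequence with uniformly bounded increments
whose Cesàro averages have limit superior at most a finite constant `C` satisfies
`f t / t → 0`. -/
theorem bounded_increment_cesaro (f : ℕ → ℝ) (hf : ∀ t, 0 ≤ f t)
    (M : ℝ) (hM : 0 < M) (hbd : ∀ t, |f (t + 1) - f t| ≤ M)
    (C : ℝ)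
    (hC : Filter.limsup
        (fun t : ℕ => (((1 / (t : ℝ)) * ∑ i ∈ Finset.range (t + 1), f i : ℝ) : EReal))
        Filter.atTop ≤ (C : EReal)) :
    Filter.Tendsto (fun t : ℕ => f t / (t : ℝ)) Filter.atTop (nhds 0) := by
  refine tendsto_div_of_sum_range_le hf hM (fun t => le_of_abs_le (hbd t)) (B := C + 1) ?_
  have hlt := hC.trans_lt (EReal.coe_lt_coe_iff.2 (lt_add_one C))
  filter_upwards [eventually_lt_of_limsup_lt hlt, eventually_gt_atTop 0] with n hn hn0
  have hn : (1 / (n : ℝ)) * ∑ i ∈ range (n + 1), f i < C + 1 := by exact_mod_cast hn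
  rw [one_div, inv_mul_lt_iff₀ (by exact_mod_cast hn0)] at hn
  linarith
end

section
/- Let p, q ∈ [0,1] and r, r' ≥ 0 be real numbers and n a positive integer. If r·p ≥ r'·q, then r·∑_{t=1}^{n} p(1−p)^{t−1}(1−q)^{n−t} ≥ r'·∑_{t=1}^{n} q(1−q)^{t−1}(1−p)^{n−t}. -/
/-! Both sides factor through the same symmetric sum `S = ∑_{i+j=n-1} (1-p)^i (1-q)^j`:
the left one is `r * p * S` and the right one is `r' * q * S`, so `S ≥ 0` and `r p ≥ r' q`
finish the comparison. -/

open Finset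

lemma sum_Icc_one_mul_pow_mul_pow {R : Type*} [CommSemiring R] (c x y : R) (n : ℕ) :
    ∑ t ∈ Icc 1 n, c * x ^ (t - 1) * y ^ (n - t) =
      c * ∑ i ∈ range n, x ^ i * y ^ (n - 1 - i) := by
  rw [mul_sum, ← Ico_add_one_right_eq_Icc, sum_Ico_eq_sum_range, Nat.add_sub_cancel]
  refine sum_congr rfl fun i _ => ?_
  rw [mul_assoc, add_comm 1 i, Nat.add_sub_cancel, Nat.sub_sub, add_comm 1 i]

theorem exclusive_delivery_comparison_general (p q : ℝ) (hp : p ∈ Set.Icc (0 : ℝ) 1)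
    (hq : q ∈ Set.Icc (0 : ℝ) 1) (r r' : ℝ)
    (n : ℕ) (h : r * p ≥ r' * q) :
    r * ∑ t ∈ Finset.Icc 1 n, p * (1 - p) ^ (t - 1) * (1 - q) ^ (n - t) ≥
      r' * ∑ t ∈ Finset.Icc 1 n, q * (1 - q) ^ (t - 1) * (1 - p) ^ (n - t) := by
  rw [sum_Icc_one_mul_pow_mul_pow, sum_Icc_one_mul_pow_mul_pow, geom_sum₂_comm (1 - q),
    ← mul_assoc, ← mul_assoc]
  have hp' : 0 ≤ 1 - p := sub_nonneg.2 hp.2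
  have hq' : 0 ≤ 1 - q := sub_nonneg.2 hq.2
  have hS : 0 ≤ ∑ i ∈ range n, (1 - p) ^ i * (1 - q) ^ (n - 1 - i) := by positivity
  exact mul_le_mul_of_nonneg_right h hS

/-- Joint debt-channel comparison: if `r * p ≥ r' * q` then prioritizing the client with
reliability `p` gives at least as large a weighted exclusive-delivery probability. -/
theorem exclusive_delivery_comparison (p q : ℝ) (hp : p ∈ Set.Icc (0 : ℝ) 1)
    (hq : q ∈ Set.Icc (0 : ℝ) 1) (r r' : ℝ) (hr : 0 ≤ r) (hr' : 0 ≤ r')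
    (n : ℕ) (hn : 0 < n) (h : r * p ≥ r' * q) :
    r * ∑ t ∈ Finset.Icc 1 n, p * (1 - p) ^ (t - 1) * (1 - q) ^ (n - t) ≥
      r' * ∑ t ∈ Finset.Icc 1 n, q * (1 - q) ^ (t - 1) * (1 - p) ^ (n - t) :=
  exclusive_delivery_comparison_general p q hp hq r r' n h
end

section
/- Let p, q ∈ ℝ and n a positive integer. Then ∑_{t=1}^{n} p(1−p)^{t−1}(1 − (1−q)^{n−t}) = ∑_{t=1}^{n} q(1−q)^{t−1}(1 − (1−p)^{n−t}). -/
/-!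
Summing the geometric series in `p`, each side equals `1 - (1 - p) ^ n - p * G` (resp.
`1 - (1 - q) ^ n - q * G`), where `G = ∑_{i < n} (1 - p) ^ i (1 - q) ^ (n - 1 - i)` is symmetric in
`p` and `q`. The difference of the two sides is then `(x - y) G - (x ^ n - y ^ n)` with
`x = 1 - p`, `y = 1 - q`, which vanishes by the factorisation of `x ^ n - y ^ n`.
-/

open Finset

theorem sum_Icc_geom_mul_one_sub_pow_eq {R : Type*} [CommRing R] (p q : R) (n : ℕ) :
    ∑ t ∈ Icc 1 n, p * (1 - p) ^ (t - 1) * (1 - (1 - q) ^ (n - t)) =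
      1 - (1 - p) ^ n - p * ∑ i ∈ range n, (1 - p) ^ i * (1 - q) ^ (n - 1 - i) := by
  have hgeom : p * ∑ i ∈ range n, (1 - p) ^ i = 1 - (1 - p) ^ n := by
    rw [mul_comm, ← geom_sum_mul_neg, sub_sub_cancel]
  rw [← Ico_add_one_right_eq_Icc, sum_Ico_eq_sum_range, ← hgeom, mul_sum, mul_sum,
    ← sum_sub_distrib]
  refine sum_congr rfl fun i _ => ?_
  rw [Nat.add_sub_cancel_left, show n - (1 + i) = n - 1 - i by omega]
  ring

theorem both_delivered_symmetric_general (p q : ℝ) (n : ℕ) :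
    ∑ t ∈ Finset.Icc 1 n, p * (1 - p) ^ (t - 1) * (1 - (1 - q) ^ (n - t)) =
      ∑ t ∈ Finset.Icc 1 n, q * (1 - q) ^ (t - 1) * (1 - (1 - p) ^ (n - t)) := by
  rw [sum_Icc_geom_mul_one_sub_pow_eq, sum_Icc_geom_mul_one_sub_pow_eq, geom_sum₂_comm (1 - q)]
  linear_combination geom_sum₂_mul (1 - p) (1 - q) n

/-- The probability that both packets are delivered is the same under either priority
ordering: an algebraic identity valid for all real `p`, `q`. -/
theorem both_delivered_symmetric (p q : ℝ) (n : ℕ) (hn : 0 < n) :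
    ∑ t ∈ Finset.Icc 1 n, p * (1 - p) ^ (t - 1) * (1 - (1 - q) ^ (n - t)) =
      ∑ t ∈ Finset.Icc 1 n, q * (1 - q) ^ (t - 1) * (1 - (1 - p) ^ (n - t)) :=
  both_delivered_symmetric_general p q n
end

section
/- Let N and T be positive integers; for n = 1,…,N let r_n ≥ 0 be a real value, s_n a positive integer service time, and τ_n ≤ T a positive integer deadline, with the indexing sorted so that τ_1 ≤ τ_2 ≤ ⋯ ≤ τ_N. Call a subset S ⊆ {1,…,n} feasible within time t if, executing the jobs of S consecutively in increasing index order, each completes by its own deadline and by time t; that is, for every m ∈ S, ∑_{m' ∈ S, m' ≤ m} s_{m'} ≤ min(τ_m, t). Define M[n,t] for 0 ≤ n ≤ N, 0 ≤ t ≤ T by M[0,t] = 0, M[n,0] = 0, M[n,t] = M[n,t−1] if t > τ_n, and otherwise M[n,t] = max{ M[n−1,t], r_n + M[n−1, t−s_n] } (with the second option allowed only when t ≥ s_n). Then M[N,T] equals the maximum of ∑_{n∈S} r_n over all subsets S ⊆ {1,…,N} feasible within time T. -/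
/-!
Write `F n t` for the set of rewards of subsets of `{1,…,n}` feasible within time `t`.
It suffices that `F n t` obeys the recursion of `knapsackDP`. If `t > τ (n+1)` then, the deadlines
being sorted, every job of `{1,…,n+1}` has deadline below `t`, so the horizons `t` and `t - 1`
impose the same constraints. Otherwise a feasible set either avoids `n + 1`, or contains it as its
last job; in that case job `n + 1` finishes at the total load, which must fit within `t`
(hence also within `τ (n+1)`), and the remaining jobs must be feasible within `t - s (n+1)`.
-/

/-- The dynamic program of the Modified Knapsack Policy:
`knapsackDP r s τ n t` is `M[n,t]`, with `M[0,t] = 0`, `M[n,0] = 0`,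
`M[n,t] = M[n,t-1]` if `t > τ n`, and otherwise
`M[n,t] = max (M[n-1,t]) (r n + M[n-1, t - s n])`, the second option being
allowed only when `t ≥ s n`. -/
noncomputable def knapsackDP (r : ℕ → ℝ) (s τ : ℕ → ℕ) : ℕ → ℕ → ℝ
  | 0, _ => 0
  | _ + 1, 0 => 0
  | n + 1, t + 1 =>
    if τ (n + 1) < t + 1 then knapsackDP r s τ (n + 1) t
    else if s (n + 1) ≤ t + 1 then
      max (knapsackDP r s τ n (t + 1))
        (r (n + 1) + knapsackDP r s τ n (t + 1 - s (n + 1)))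
    else knapsackDP r s τ n (t + 1)
  termination_by n t => (n, t)

open Finset

def FeasibleWithin (s τ : ℕ → ℕ) (t : ℕ) (S : Finset ℕ) : Prop :=
  ∀ m ∈ S, ∑ m' ∈ S.filter (fun m' => m' ≤ m), s m' ≤ min (τ m) t

def feasibleRewards (r : ℕ → ℝ) (s τ : ℕ → ℕ) (n t : ℕ) : Set ℝ :=
  {x : ℝ | ∃ S : Finset ℕ, S ⊆ Icc 1 n ∧ FeasibleWithin s τ t S ∧ x = ∑ n ∈ S, r n}

section FeasibleWithin

variable {s τ : ℕ → ℕ} {t : ℕ} {S : Finset ℕ}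

theorem FeasibleWithin.sum_le (h : FeasibleWithin s τ t S) : ∑ m ∈ S, s m ≤ t := by
  rcases S.eq_empty_or_nonempty with rfl | hne
  · simp
  · have hlast := h _ (S.max'_mem hne)
    rw [filter_true_of_mem fun m hm => S.le_max' m hm] at hlast
    exact hlast.trans (min_le_right _ _)

theorem FeasibleWithin.le_of_mem (h : FeasibleWithin s τ t S) {m : ℕ} (hm : m ∈ S) :
    s m ≤ t :=
  (single_le_sum (fun _ _ => Nat.zero_le _) hm).trans h.sum_le

theorem feasibleWithin_iff_of_forall_deadline_le {t' : ℕ} (hτ : ∀ m ∈ S, τ m ≤ t)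
    (htt' : t ≤ t') : FeasibleWithin s τ t S ↔ FeasibleWithin s τ t' S := by
  refine forall₂_congr fun m hm => ?_
  rw [min_eq_left (hτ m hm), min_eq_left ((hτ m hm).trans htt')]

theorem feasibleWithin_insert_iff {k : ℕ} (hS : ∀ m ∈ S, m < k) (hτk : t ≤ τ k) :
    FeasibleWithin s τ t (insert k S) ↔ s k ≤ t ∧ FeasibleWithin s τ (t - s k) S := by
  have hkS : k ∉ S := fun hk => (hS k hk).false
  have hprefix : ∀ m ∈ S, (insert k S).filter (fun m' => m' ≤ m) = S.filter (fun m' => m' ≤ m) :=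
    fun m hm => by rw [filter_insert, if_neg (hS m hm).not_ge]
  have hlast : (insert k S).filter (fun m' => m' ≤ k) = insert k S :=
    filter_true_of_mem fun m hm => (mem_insert.1 hm).elim le_of_eq fun h => (hS m h).le
  simp only [FeasibleWithin, forall_mem_insert, hlast, sum_insert hkS, min_eq_right hτk]
  constructor
  · rintro ⟨hload, hF⟩
    refine ⟨by omega, fun m hm => le_min ?_ ?_⟩
    · exact (hprefix m hm ▸ hF m hm).trans (min_le_left _ _)
    · have := sum_le_sum_of_subset (f := s) (filter_subset (fun m' => m' ≤ m) S)
      omega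
  · rintro ⟨hsk, hF⟩
    have hload := FeasibleWithin.sum_le hF
    refine ⟨by omega, fun m hm => ?_⟩
    rw [hprefix m hm]
    exact (hF m hm).trans (min_le_min_left _ (Nat.sub_le t (s k)))

end FeasibleWithin

section feasibleRewards

variable {r : ℕ → ℝ} {s τ : ℕ → ℕ} {n t : ℕ}

theorem feasibleRewards_zero_left : feasibleRewards r s τ 0 t = {0} := by
  ext x
  simp only [feasibleRewards, Icc_eq_empty_of_lt zero_lt_one, subset_empty,
    Set.mem_ofPred_eq, Set.mem_singleton_iff]
  constructor
  · rintro ⟨S, rfl, -, rfl⟩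
    rfl
  · rintro rfl
    exact ⟨∅, rfl, by simp [FeasibleWithin], rfl⟩

theorem feasibleRewards_succ_right_of_forall_deadline_le (hτ : ∀ m ∈ Icc 1 n, τ m ≤ t) :
    feasibleRewards r s τ n (t + 1) = feasibleRewards r s τ n t := by
  ext x
  refine exists_congr fun S => and_congr_right fun hS => and_congr_left fun _ => ?_
  exact (feasibleWithin_iff_of_forall_deadline_le (fun m hm => hτ m (hS hm)) t.le_succ).symm

theorem feasibleRewards_succ_left_of_lt (hst : t < s (n + 1)) :
    feasibleRewards r s τ (n + 1) t = feasibleRewards r s τ n t := by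
  ext x
  refine exists_congr fun S => ⟨fun ⟨hS, hF, hx⟩ => ⟨?_, hF, hx⟩,
    fun ⟨hS, hF, hx⟩ => ⟨hS.trans (Icc_subset_Icc_right n.le_succ), hF, hx⟩⟩
  have hn : n + 1 ∉ S := fun h => (hF.le_of_mem h).not_gt hst
  rwa [← insert_Icc_right_eq_Icc_add_one (Nat.le_add_left 1 n),
    subset_insert_iff_of_notMem hn] at hS

theorem feasibleRewards_succ_left (hst : s (n + 1) ≤ t) (hτ : t ≤ τ (n + 1)) :
    feasibleRewards r s τ (n + 1) t =
      feasibleRewards r s τ n t ∪ (r (n + 1) + ·) '' feasibleRewards r s τ n (t - s (n + 1)) := by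
  have hlt : ∀ {S : Finset ℕ}, S ⊆ Icc 1 n → ∀ m ∈ S, m < n + 1 :=
    fun hS m hm => Nat.lt_succ_of_le (mem_Icc.1 (hS hm)).2
  ext x
  constructor
  · rintro ⟨S, hS, hF, rfl⟩
    rw [← insert_Icc_right_eq_Icc_add_one (Nat.le_add_left 1 n)] at hS
    by_cases hn : n + 1 ∈ S
    · rw [subset_insert_iff] at hS
      rw [← insert_erase hn, feasibleWithin_insert_iff (hlt hS) hτ] at hF
      exact Or.inr ⟨_, ⟨S.erase (n + 1), hS, hF.2, rfl⟩, add_sum_erase S r hn⟩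
    · exact Or.inl ⟨S, (subset_insert_iff_of_notMem hn).1 hS, hF, rfl⟩
  · rintro (⟨S, hS, hF, rfl⟩ | ⟨_, ⟨S, hS, hF, rfl⟩, rfl⟩)
    · exact ⟨S, hS.trans (Icc_subset_Icc_right n.le_succ), hF, rfl⟩
    · have hn : n + 1 ∉ S := fun h => (hlt hS _ h).false
      refine ⟨insert (n + 1) S, ?_, (feasibleWithin_insert_iff (hlt hS) hτ).2 ⟨hst, hF⟩,
        (sum_insert hn).symm⟩
      rw [← insert_Icc_right_eq_Icc_add_one (Nat.le_add_left 1 n)]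
      exact insert_subset_insert _ hS

end feasibleRewards

theorem knapsackDP_zero_right (r : ℕ → ℝ) (s τ : ℕ → ℕ) (n : ℕ) : knapsackDP r s τ n 0 = 0 := by
  cases n <;> rw [knapsackDP]

theorem isGreatest_knapsackDP_succ {r : ℕ → ℝ} {s τ : ℕ → ℕ} {n : ℕ} (hs : 0 < s (n + 1))
    (hsorted : ∀ m ∈ Icc 1 (n + 1), τ m ≤ τ (n + 1))
    (ih : ∀ t, IsGreatest (feasibleRewards r s τ n t) (knapsackDP r s τ n t)) (t : ℕ) :
    IsGreatest (feasibleRewards r s τ (n + 1) t) (knapsackDP r s τ (n + 1) t) := by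
  induction t with
  | zero =>
    rw [feasibleRewards_succ_left_of_lt hs, knapsackDP_zero_right]
    simpa only [knapsackDP_zero_right] using ih 0
  | succ t iht =>
    by_cases hτ : τ (n + 1) < t + 1
    · rw [knapsackDP, if_pos hτ, feasibleRewards_succ_right_of_forall_deadline_le
        fun m hm => (hsorted m hm).trans (Nat.le_of_lt_succ hτ)]
      exact iht
    by_cases hst : s (n + 1) ≤ t + 1
    · rw [knapsackDP, if_neg hτ, if_pos hst, feasibleRewards_succ_left hst (not_lt.1 hτ)]
      exact (ih _).union ((monotone_id.const_add _).map_isGreatest (ih _))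
    · rw [knapsackDP, if_neg hτ, if_neg hst, feasibleRewards_succ_left_of_lt (not_le.1 hst)]
      exact ih _

theorem isGreatest_knapsackDP {r : ℕ → ℝ} {s τ : ℕ → ℕ} {N : ℕ}
    (hs : ∀ n ∈ Icc 1 N, 0 < s n) (hsorted : ∀ m n, 1 ≤ m → m ≤ n → n ≤ N → τ m ≤ τ n) :
    ∀ n ≤ N, ∀ t, IsGreatest (feasibleRewards r s τ n t) (knapsackDP r s τ n t) := by
  intro n
  induction n with
  | zero =>
    intro _ t
    rw [feasibleRewards_zero_left, knapsackDP]
    exact isGreatest_singleton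
  | succ n ih =>
    intro hn
    refine isGreatest_knapsackDP_succ (hs _ (mem_Icc.2 ⟨n.succ_pos, hn⟩)) ?_ (ih (by omega))
    exact fun m hm => hsorted m (n + 1) (mem_Icc.1 hm).1 (mem_Icc.1 hm).2 hn

theorem knapsackDP_correct_general (N T : ℕ)
    (r : ℕ → ℝ) (s τ : ℕ → ℕ)
    (hs : ∀ n ∈ Finset.Icc 1 N, 0 < s n)
    (hsorted : ∀ m n, 1 ≤ m → m ≤ n → n ≤ N → τ m ≤ τ n) :
    IsGreatest
      {x : ℝ | ∃ S : Finset ℕ, S ⊆ Finset.Icc 1 N ∧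
        (∀ m ∈ S, ∑ m' ∈ S.filter (fun m' => m' ≤ m), s m' ≤ min (τ m) T) ∧
        x = ∑ n ∈ S, r n}
      (knapsackDP r s τ N T) :=
  isGreatest_knapsackDP hs hsorted N le_rfl T

/-- Correctness of the Modified Knapsack dynamic program: given deadlines sorted as
`τ 1 ≤ τ 2 ≤ ⋯ ≤ τ N`, the value `M[N,T]` is the maximum of `∑_{n ∈ S} r n` over all
subsets `S ⊆ {1,…,N}` that are feasible within time `T`, i.e. such that executing the
jobs of `S` consecutively in increasing index order every job `m ∈ S` completes by
`min (τ m) T`. -/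
theorem knapsackDP_correct (N T : ℕ) (hN : 0 < N) (hT : 0 < T)
    (r : ℕ → ℝ) (s τ : ℕ → ℕ)
    (hr : ∀ n ∈ Finset.Icc 1 N, 0 ≤ r n)
    (hs : ∀ n ∈ Finset.Icc 1 N, 0 < s n)
    (hτpos : ∀ n ∈ Finset.Icc 1 N, 0 < τ n)
    (hτle : ∀ n ∈ Finset.Icc 1 N, τ n ≤ T)
    (hsorted : ∀ m n, 1 ≤ m → m ≤ n → n ≤ N → τ m ≤ τ n) :
    IsGreatest
      {x : ℝ | ∃ S : Finset ℕ, S ⊆ Finset.Icc 1 N ∧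
        (∀ m ∈ S, ∑ m' ∈ S.filter (fun m' => m' ≤ m), s m' ≤ min (τ m) T) ∧
        x = ∑ n ∈ S, r n}
      (knapsackDP r s τ N T) :=
  knapsackDP_correct_general N T r s τ hs hsorted
end

section
/- Define V : List (ℝ × ℝ) → ℕ → ℝ by V([], n) = 0, V(l, 0) = 0, and V((r,p)::l, n+1) = p·(r + V(l, n)) + (1−p)·V((r,p)::l, n). Let l₁, l₂ be lists of pairs (r,p) with all r ≥ 0 and all p ∈ [0,1], and let a = (r_a, p_a), b = (r_b, p_b) with r_a, r_b ≥ 0, p_a, p_b ∈ [0,1]. If r_a·p_a ≥ r_b·p_b, then V(l₁ ++ [a, b] ++ l₂, n) ≥ V(l₁ ++ [b, a] ++ l₂, n) for every n ∈ ℕ. -/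
/-!
Write `a = (ra, pa)`, `b = (rb, pb)` and let `Dₙ` be the gain of serving `a` before `b` in
front of a fixed tail. Unfolding one slot gives `Dₙ₊₁ = (1 - pa) Dₙ + (ra pa - rb pb) (1 - pb)ⁿ`,
so `Dₙ ≥ 0` by induction when `ra pa ≥ rb pb`. A common prefix of clients preserves the order
of payoffs, since each slot mixes the continuations with the weights `p` and `1 - p`.
-/

/-- `expectedDebt l n` is the expected total collected debt when the AP has `n` time
slots and serves clients in the priority order `l`, each client being a pair `(r, p)` of
its delivery debt and channel reliability: each slot the AP transmits to the first
unserved client, succeeding with probability `p`, collecting `r` upon success. -/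
noncomputable def expectedDebt : List (ℝ × ℝ) → ℕ → ℝ
  | [], _ => 0
  | _ :: _, 0 => 0
  | (r, p) :: l, n + 1 =>
      p * (r + expectedDebt l n) + (1 - p) * expectedDebt ((r, p) :: l) n
  termination_by l n => (l.length, n)

open Set

@[simp]
lemma expectedDebt_zero (l : List (ℝ × ℝ)) : expectedDebt l 0 = 0 := by
  cases l <;> rw [expectedDebt]

lemma expectedDebt_cons_succ (r p : ℝ) (l : List (ℝ × ℝ)) (n : ℕ) :
    expectedDebt ((r, p) :: l) (n + 1) =
      p * (r + expectedDebt l n) + (1 - p) * expectedDebt ((r, p) :: l) n := by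
  rw [expectedDebt]

lemma expectedDebt_cons_mono {l l' : List (ℝ × ℝ)} (hl : expectedDebt l ≤ expectedDebt l')
    (r : ℝ) {p : ℝ} (hp : p ∈ Icc (0 : ℝ) 1) :
    expectedDebt ((r, p) :: l) ≤ expectedDebt ((r, p) :: l') := by
  intro n
  induction n with
  | zero => simp
  | succ n ih =>
    rw [expectedDebt_cons_succ, expectedDebt_cons_succ]
    have hq : 0 ≤ 1 - p := sub_nonneg.2 hp.2
    gcongr
    · exact hp.1
    · exact hl n

lemma expectedDebt_append_mono {l₁ l l' : List (ℝ × ℝ)} (h₁ : ∀ x ∈ l₁, x.2 ∈ Icc (0 : ℝ) 1)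
    (hl : expectedDebt l ≤ expectedDebt l') :
    expectedDebt (l₁ ++ l) ≤ expectedDebt (l₁ ++ l') := by
  induction l₁ with
  | nil => exact hl
  | cons x l₁ ih =>
    exact expectedDebt_cons_mono (ih fun y hy => h₁ y (.tail x hy)) x.1
      (h₁ x List.mem_cons_self)

section Swap

variable (ra pa rb pb : ℝ) (l : List (ℝ × ℝ))

/-- Eliminates the single-client payoffs `expectedDebt ((ra, pa) :: l)` and
`expectedDebt ((rb, pb) :: l)` from the one-slot unfolding of the swap difference. -/
lemma expectedDebt_swap_elim (n : ℕ) :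
    pa * expectedDebt ((rb, pb) :: l) n - pb * expectedDebt ((ra, pa) :: l) n
      + (pb - pa) * expectedDebt ((rb, pb) :: (ra, pa) :: l) n
    = (ra * pa - rb * pb) * ((1 - pb) ^ n - 1) := by
  induction n with
  | zero => simp
  | succ n ih =>
    simp only [expectedDebt_cons_succ]
    linear_combination (1 - pb) * ih

lemma expectedDebt_swap_sub_succ (n : ℕ) :
    expectedDebt ((ra, pa) :: (rb, pb) :: l) (n + 1)
        - expectedDebt ((rb, pb) :: (ra, pa) :: l) (n + 1)
      = (1 - pa) * (expectedDebt ((ra, pa) :: (rb, pb) :: l) n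
          - expectedDebt ((rb, pb) :: (ra, pa) :: l) n)
        + (ra * pa - rb * pb) * (1 - pb) ^ n := by
  rw [expectedDebt_cons_succ, expectedDebt_cons_succ]
  linear_combination expectedDebt_swap_elim ra pa rb pb l n

variable {ra pa rb pb}

lemma expectedDebt_swap_le (hpa : pa ≤ 1) (hpb : pb ≤ 1) (h : rb * pb ≤ ra * pa) :
    expectedDebt ((rb, pb) :: (ra, pa) :: l) ≤ expectedDebt ((ra, pa) :: (rb, pb) :: l) := by
  intro n
  rw [← sub_nonneg]
  induction n with
  | zero => simp
  | succ n ih =>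
    rw [expectedDebt_swap_sub_succ]
    have hqa : 0 ≤ 1 - pa := sub_nonneg.2 hpa
    have hqb : 0 ≤ 1 - pb := sub_nonneg.2 hpb
    have hc : 0 ≤ ra * pa - rb * pb := sub_nonneg.2 h
    positivity

end Swap

theorem expectedDebt_swap_general (l₁ l₂ : List (ℝ × ℝ))
    (h₁ : ∀ x ∈ l₁, 0 ≤ x.1 ∧ x.2 ∈ Set.Icc (0 : ℝ) 1)
    (ra pa rb pb : ℝ)
    (hpa : pa ∈ Set.Icc (0 : ℝ) 1) (hpb : pb ∈ Set.Icc (0 : ℝ) 1)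
    (h : ra * pa ≥ rb * pb) (n : ℕ) :
    expectedDebt (l₁ ++ [(ra, pa), (rb, pb)] ++ l₂) n ≥
      expectedDebt (l₁ ++ [(rb, pb), (ra, pa)] ++ l₂) n := by
  simp only [List.append_assoc, List.cons_append, List.nil_append]
  exact expectedDebt_append_mono (fun x hx => (h₁ x hx).2)
    (expectedDebt_swap_le l₂ hpa.2 hpb.2 h) n

/-- Adjacent-swap inequality for the joint debt-channel policy: placing first the client
with the larger debt-reliability product `r * p` does not decrease the expected payoff. -/
theorem expectedDebt_swap (l₁ l₂ : List (ℝ × ℝ))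
    (h₁ : ∀ x ∈ l₁, 0 ≤ x.1 ∧ x.2 ∈ Set.Icc (0 : ℝ) 1)
    (h₂ : ∀ x ∈ l₂, 0 ≤ x.1 ∧ x.2 ∈ Set.Icc (0 : ℝ) 1)
    (ra pa rb pb : ℝ) (hra : 0 ≤ ra) (hrb : 0 ≤ rb)
    (hpa : pa ∈ Set.Icc (0 : ℝ) 1) (hpb : pb ∈ Set.Icc (0 : ℝ) 1)
    (h : ra * pa ≥ rb * pb) (n : ℕ) :
    expectedDebt (l₁ ++ [(ra, pa), (rb, pb)] ++ l₂) n ≥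
      expectedDebt (l₁ ++ [(rb, pb), (ra, pa)] ++ l₂) n :=
  expectedDebt_swap_general l₁ l₂ h₁ ra pa rb pb hpa hpb h n
end
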